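/- arXiv:1209.4255 — 3 statements merged into one kernel-verified Lean document; each statement's English description precedes it below -/
import Mathlib

section
/- For all integers μ ≥ 1 and ε ≥ 1 with ε ≤ μ, the inequality ∑_{i=0}^{ε} ∑_{j=0}^{ε} C(μ,i)·C(μ,j) > ∑_{i=0}^{ε} ∑_{j=0}^{ε} C(μ-1,i)·C(μ+1,j) holds, i.e., the sequence μ ↦ S_μ(ε) := ∑_{i=0}^{ε} C(μ,i) satisfies S_μ(ε)² > S_{μ-1}(ε)·S_{μ+1}(ε). -/
/-!
Write `S m r = ∑_{i ≤ r} C(m, i)`. Pascal's rule gives `S (m+1) (r+1) = S m (r+1) + S m r`, which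
turns `S_μ² - S_{μ-1} S_{μ+1}` (with `S_μ = S μ ε`) into `S_{μ-1} C(μ, ε) - S_μ C(μ-1, ε)`. This is positive because
`C(μ-1, k) = (μ - k)/μ · C(μ, k)` and the factor `(μ - k)/μ` decreases in `k`, so
`C(μ-1, ε) C(μ, i) ≤ C(μ-1, i) C(μ, ε)` for every `i ≤ ε`, strictly for `i = 0`.
-/

open Finset

def hammingBallCard (m r : ℕ) : ℕ := ∑ i ∈ range (r + 1), m.choose i

lemma hammingBallCard_succ_right (m r : ℕ) :
    hammingBallCard m (r + 1) = hammingBallCard m r + m.choose (r + 1) :=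
  sum_range_succ _ _

lemma hammingBallCard_succ_succ (m r : ℕ) :
    hammingBallCard (m + 1) (r + 1) = hammingBallCard m (r + 1) + hammingBallCard m r := by
  induction r with
  | zero => simp [hammingBallCard, sum_range_succ]; ring
  | succ r ih =>
    rw [hammingBallCard_succ_right, ih, Nat.choose_succ_succ, hammingBallCard_succ_right m (r + 1),
      hammingBallCard_succ_right m r]
    ring

lemma choose_mul_choose_le_choose_mul_choose (m : ℕ) {i r : ℕ} (hir : i ≤ r) :
    m.choose r * (m + 1).choose i ≤ m.choose i * (m + 1).choose r := by
  refine Nat.le_of_mul_le_mul_right ?_ m.succ_pos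
  calc m.choose r * (m + 1).choose i * (m + 1)
      = (m + 1).choose r * (m + 1 - r) * (m + 1).choose i := by
        rw [← Nat.choose_mul_succ_eq]; ring
    _ ≤ (m + 1).choose r * (m + 1 - i) * (m + 1).choose i := by gcongr
    _ = m.choose i * (m + 1).choose r * (m + 1) := by
        rw [mul_right_comm, mul_assoc, ← Nat.choose_mul_succ_eq]; ring

lemma choose_lt_choose_succ_left {m r : ℕ} (hr : r ≤ m) :
    m.choose (r + 1) < (m + 1).choose (r + 1) := by
  rw [Nat.choose_succ_succ']
  have := Nat.choose_pos hr
  omega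

lemma choose_mul_hammingBallCard_lt {m r : ℕ} (hr : r ≤ m) :
    m.choose (r + 1) * hammingBallCard (m + 1) (r + 1) <
      hammingBallCard m (r + 1) * (m + 1).choose (r + 1) := by
  simp only [hammingBallCard, mul_sum, sum_mul]
  refine sum_lt_sum (fun i hi ↦ choose_mul_choose_le_choose_mul_choose m ?_) ⟨0, by simp, ?_⟩
  · exact Nat.lt_succ_iff.mp (mem_range.mp hi)
  · simpa using choose_lt_choose_succ_left hr

theorem stmt_0 (μ ε : ℕ) (hμ : 1 ≤ μ) (hε : 1 ≤ ε) (hεμ : ε ≤ μ) :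
    (∑ i ∈ Finset.range (ε + 1), μ.choose i) ^ 2 >
      (∑ i ∈ Finset.range (ε + 1), (μ - 1).choose i) *
        (∑ i ∈ Finset.range (ε + 1), (μ + 1).choose i) := by
  obtain ⟨m, rfl⟩ := Nat.exists_eq_add_of_le' hμ
  obtain ⟨r, rfl⟩ := Nat.exists_eq_add_of_le' hε
  change hammingBallCard m (r + 1) * hammingBallCard (m + 1 + 1) (r + 1) <
    hammingBallCard (m + 1) (r + 1) ^ 2
  have key := choose_mul_hammingBallCard_lt (by omega : r ≤ m)
  have pascal₀ := hammingBallCard_succ_succ m r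
  have pascal₁ := hammingBallCard_succ_succ (m + 1) r
  have top₀ := hammingBallCard_succ_right m r
  have top₁ := hammingBallCard_succ_right (m + 1) r
  set S₀ := hammingBallCard m (r + 1)
  set S₁ := hammingBallCard (m + 1) (r + 1)
  zify at key pascal₀ pascal₁ top₀ top₁ ⊢
  linear_combination key + S₀ * pascal₁ - S₁ * pascal₀ - S₀ * top₁ + S₁ * top₀
end

section
/- If t is the mode of the sequence a_μ = 2^{-μ/2} ∑_{i=0}^{ε} C(μ,i) (for fixed ε ≥ 1), then (1+√2)ε − 1 ≤ t ≤ (2+√2)ε. -/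
/-!
Write `S μ = ∑_{i ≤ ε} C(μ, i)`. Pascal's rule gives `S (μ + 1) = 2 S μ - C(μ, ε)`, hence
`√2 · a (μ + 1) / a μ = 2 - C(μ, ε) / S μ`, and `a` increases at `μ` exactly when
`C(μ, ε) < (2 - √2) S μ`. The last two terms of `S μ` give `(μ + 1) C(μ, ε) ≤ (μ - ε + 1) S μ`, and
comparing consecutive terms gives `(μ - 2ε + 1) S μ ≤ (μ - ε + 1) C(μ, ε)`; so `a` still increases
while `μ + 1 < (1 + √2) ε` and already decreases once `μ + 1 > (2 + √2) ε`.
-/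

open Finset Real

noncomputable section

def chooseSum (n k : ℕ) : ℝ := ∑ i ∈ range (k + 1), (n.choose i : ℝ)

def scaledChooseSum (k n : ℕ) : ℝ := (2 : ℝ) ^ (-(n : ℝ) / 2) * chooseSum n k

lemma chooseSum_pos (n k : ℕ) : 0 < chooseSum n k := by
  rw [chooseSum, sum_range_succ']
  simp only [Nat.choose_zero_right, Nat.cast_one]
  exact add_pos_of_nonneg_of_pos (sum_nonneg fun _ _ => by positivity) one_pos

lemma chooseSum_succ (n k : ℕ) : chooseSum (n + 1) k = 2 * chooseSum n k - n.choose k := by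
  induction k with
  | zero => simp [chooseSum]; norm_num
  | succ k ih =>
    simp only [chooseSum] at ih ⊢
    rw [sum_range_succ, ih, sum_range_succ (fun i => (n.choose i : ℝ)) (k + 1),
      Nat.choose_succ_succ]
    push_cast
    ring

lemma cast_choose_succ_mul (n k : ℕ) :
    (n.choose (k + 1) : ℝ) * (k + 1) = n.choose k * (n - k) := by
  rcases le_or_gt k n with hkn | hnk
  · have h := Nat.choose_succ_right_eq n k
    rw [← Nat.cast_inj (R := ℝ)] at h
    push_cast [Nat.cast_sub hkn] at h
    exact h
  · simp [Nat.choose_eq_zero_of_lt hnk, Nat.choose_eq_zero_of_lt (hnk.trans k.lt_succ_self)]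

lemma succ_mul_choose_le_mul_chooseSum {n k : ℕ} (hkn : k ≤ n) :
    ((n : ℝ) + 1) * n.choose k ≤ ((n : ℝ) - k + 1) * chooseSum n k := by
  obtain _ | j := k
  · simp [chooseSum]
  have hjn : (j : ℝ) + 1 ≤ n := by exact_mod_cast hkn
  have hlast_two : (n.choose j : ℝ) + n.choose (j + 1) ≤ chooseSum n (j + 1) := by
    rw [chooseSum, sum_range_succ, sum_range_succ]
    linarith [(sum_nonneg fun i _ => Nat.cast_nonneg _ : (0 : ℝ) ≤ ∑ i ∈ range j, (n.choose i : ℝ))]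
  have := cast_choose_succ_mul n j
  push_cast
  nlinarith

lemma mul_chooseSum_le_mul_choose (n k : ℕ) :
    ((n : ℝ) - 2 * k + 1) * chooseSum n k ≤ ((n : ℝ) - k + 1) * n.choose k := by
  -- consecutive terms: `(n - k + 1) C(n, i) ≤ (n - i) C(n, i) = (i + 1) C(n, i + 1) ≤ k C(n, i + 1)`
  have hterm : ∀ i ∈ range k,
      ((n : ℝ) - k + 1) * n.choose i ≤ k * n.choose (i + 1) := by
    intro i hi
    have hik : (i : ℝ) + 1 ≤ k := by exact_mod_cast mem_range.mp hi
    have := cast_choose_succ_mul n i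
    nlinarith [(Nat.cast_nonneg _ : (0 : ℝ) ≤ n.choose i),
      (Nat.cast_nonneg _ : (0 : ℝ) ≤ n.choose (i + 1))]
  have hhead : ((n : ℝ) - k + 1) * ∑ i ∈ range k, (n.choose i : ℝ) ≤ k * chooseSum n k := by
    rw [mul_sum, chooseSum, sum_range_succ', mul_add, mul_sum]
    simp only [Nat.choose_zero_right, Nat.cast_one, mul_one]
    linarith [sum_le_sum hterm, (Nat.cast_nonneg k : (0 : ℝ) ≤ k)]
  have hsplit : chooseSum n k = ∑ i ∈ range k, (n.choose i : ℝ) + n.choose k :=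
    sum_range_succ _ _
  nlinarith

lemma scaledChooseSum_succ_sub_mul_sqrt_two (k n : ℕ) :
    (scaledChooseSum k (n + 1) - scaledChooseSum k n) * √2 =
      (2 : ℝ) ^ (-(n : ℝ) / 2) * ((2 - √2) * chooseSum n k - n.choose k) := by
  have hpow : (2 : ℝ) ^ (-((n + 1 : ℕ) : ℝ) / 2) * √2 = (2 : ℝ) ^ (-(n : ℝ) / 2) := by
    rw [sqrt_eq_rpow, ← rpow_add two_pos]
    push_cast
    ring_nf
  rw [scaledChooseSum, scaledChooseSum, chooseSum_succ, sub_mul, mul_right_comm, hpow]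
  ring

lemma choose_lt_two_sub_sqrt_two_mul_chooseSum {k n : ℕ} (h : (n : ℝ) + 1 < (1 + √2) * k) :
    (n.choose k : ℝ) < (2 - √2) * chooseSum n k := by
  have hS := chooseSum_pos n k
  have hsq := sq_sqrt (zero_le_two : (0 : ℝ) ≤ 2)
  have hs2 : √2 < 2 := by nlinarith [sqrt_nonneg 2]
  rcases lt_or_ge n k with hnk | hkn
  · rw [Nat.choose_eq_zero_of_lt hnk, Nat.cast_zero]
    exact mul_pos (by linarith) hS
  have hC : (0 : ℝ) < n.choose k := by exact_mod_cast Nat.choose_pos hkn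
  have hkn' : (k : ℝ) ≤ n := by exact_mod_cast hkn
  -- the hypothesis multiplied by `√2 - 1`
  have hgap : ((n : ℝ) - k + 1) < (2 - √2) * (n + 1) := by nlinarith [sqrt_nonneg 2]
  have hbound := succ_mul_choose_le_mul_chooseSum hkn
  refine lt_of_mul_lt_mul_left ?_ (by linarith : (0 : ℝ) ≤ n - k + 1)
  nlinarith [mul_lt_mul_of_pos_right hgap hC]

lemma two_sub_sqrt_two_mul_chooseSum_lt_choose {k n : ℕ} (h : (2 + √2) * k < (n : ℝ) + 1) :
    (2 - √2) * chooseSum n k < n.choose k := by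
  have hsq := sq_sqrt (zero_le_two : (0 : ℝ) ≤ 2)
  have hs0 := sqrt_nonneg 2
  have hs2 : √2 < 2 := by nlinarith
  have hk0 : (0 : ℝ) ≤ k := Nat.cast_nonneg k
  have hkn : k ≤ n := by
    have : (k : ℝ) < n + 1 := by nlinarith
    exact Nat.lt_succ_iff.mp (by exact_mod_cast this)
  have hC : (0 : ℝ) < n.choose k := by exact_mod_cast Nat.choose_pos hkn
  -- the hypothesis multiplied by `√2 - 1`
  have hgap : (2 - √2) * ((n : ℝ) - k + 1) < n - 2 * k + 1 := by nlinarith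
  have hbound :=
    mul_le_mul_of_nonneg_left (mul_chooseSum_le_mul_choose n k) (by linarith : 0 ≤ 2 - √2)
  refine lt_of_mul_lt_mul_left ?_ (by nlinarith : (0 : ℝ) ≤ n - 2 * k + 1)
  nlinarith [mul_lt_mul_of_pos_right hgap hC]

lemma scaledChooseSum_lt_succ {k n : ℕ} (h : (n : ℝ) + 1 < (1 + √2) * k) :
    scaledChooseSum k n < scaledChooseSum k (n + 1) := by
  have hpos : 0 < (scaledChooseSum k (n + 1) - scaledChooseSum k n) * √2 := by
    rw [scaledChooseSum_succ_sub_mul_sqrt_two]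
    exact mul_pos (rpow_pos_of_pos two_pos _)
      (sub_pos.mpr (choose_lt_two_sub_sqrt_two_mul_chooseSum h))
  exact sub_pos.mp (pos_of_mul_pos_left hpos (sqrt_nonneg 2))

lemma scaledChooseSum_succ_lt {k n : ℕ} (h : (2 + √2) * k < (n : ℝ) + 1) :
    scaledChooseSum k (n + 1) < scaledChooseSum k n := by
  have hneg : (scaledChooseSum k (n + 1) - scaledChooseSum k n) * √2 < 0 := by
    rw [scaledChooseSum_succ_sub_mul_sqrt_two]
    exact mul_neg_of_pos_of_neg (rpow_pos_of_pos two_pos _)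
      (sub_neg.mpr (two_sub_sqrt_two_mul_chooseSum_lt_choose h))
  exact sub_neg.mp (neg_of_mul_neg_left hneg (sqrt_nonneg 2))

end

theorem stmt_11_general (ε : ℕ) (hε : 1 ≤ ε) (a : ℕ → ℝ)
    (ha : ∀ μ : ℕ, a μ =
      (2 : ℝ) ^ (-(μ : ℝ) / 2) * ∑ i ∈ Finset.range (ε + 1), (μ.choose i : ℝ))
    (t : ℕ) (hmode : ∀ μ : ℕ, 1 ≤ μ → a μ ≤ a t) :
    (1 + Real.sqrt 2) * (ε : ℝ) - 1 ≤ (t : ℝ) ∧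
      (t : ℝ) ≤ (2 + Real.sqrt 2) * (ε : ℝ) := by
  obtain rfl : a = scaledChooseSum ε := funext ha
  constructor
  · by_contra! h
    exact (scaledChooseSum_lt_succ (by linarith)).not_ge (hmode (t + 1) t.succ_pos)
  · by_contra! h
    have hlarge : 3 < t := by
      have : (1 : ℝ) ≤ ε := by exact_mod_cast hε
      have : (3 : ℝ) < t := by nlinarith [one_lt_sqrt_two]
      exact_mod_cast this
    obtain ⟨n, rfl⟩ : ∃ n, t = n + 1 := ⟨t - 1, by omega⟩
    exact (scaledChooseSum_succ_lt (by push_cast at h; linarith)).not_ge (hmode n (by omega))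

theorem stmt_11 (ε : ℕ) (hε : 1 ≤ ε) (a : ℕ → ℝ)
    (ha : ∀ μ : ℕ, a μ =
      (2 : ℝ) ^ (-(μ : ℝ) / 2) * ∑ i ∈ Finset.range (ε + 1), (μ.choose i : ℝ))
    (t : ℕ) (ht : 1 ≤ t) (hmode : ∀ μ : ℕ, 1 ≤ μ → a μ ≤ a t) :
    (1 + Real.sqrt 2) * (ε : ℝ) - 1 ≤ (t : ℝ) ∧
      (t : ℝ) ≤ (2 + Real.sqrt 2) * (ε : ℝ) :=
  stmt_11_general ε hε a ha t hmode
end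

section
/- Any subset A of Z₂ⁿ with diameter at most 2s (where 2s < n−1) satisfies |A| ≤ ∑_{i=0}^{s} C(n,i), i.e., Hamming balls of radius s are the largest sets of diameter 2s. (Kleitman's theorem, even case.) -/
/-!
Identify a binary word with the set of its nonzero coordinates, so that Hamming distance becomes
`#(s ∆ s')`. Down-compressions `s ↦ s.erase a` do not increase the diameter, so we may assume the
family `𝒢` is a down-set; then `s' \ s ∈ 𝒢` gives `#(s ∪ s') = #(s ∆ (s' \ s)) ≤ 2s` for all
`s, s' ∈ 𝒢`. Pair the levels `i` and `2s + 1 - i` of `𝒢` for `i ≤ s`: the complements of the sets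
of size `2s + 1 - i` form an `(n - 2s - 1)`-intersecting family, and by Katona's intersecting
shadow theorem their `(n - 2s - 1)`-fold shadow is at least as large. That shadow consists of
`i`-sets disjoint from a member of `𝒢` of size `2s + 1 - i`, hence outside `𝒢`, so the two levels
together have at most `C(n, i)` elements.
-/

open Finset FinsetFamily
open scoped symmDiff

namespace Kleitman

variable {α : Type*} [DecidableEq α]

section Compression

variable {u v : Finset α} {𝒜 : Finset (Finset α)}

lemma compression_subset {𝒮 : Finset (Finset α)} (h𝒜 : 𝒜 ⊆ 𝒮)
    (h𝒮 : ∀ s ∈ 𝒮, UV.compress u v s ∈ 𝒮) : 𝓒 u v 𝒜 ⊆ 𝒮 := by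
  intro s hs
  rcases UV.mem_compression.1 hs with ⟨hs, -⟩ | ⟨-, s', hs', rfl⟩
  · exact h𝒜 hs
  · exact h𝒮 _ (h𝒜 hs')

/-- A new set `compress u v s` of `𝓒 u v 𝒜` meets either another new set, or an old set `s'`
that is moved by the compression but kept because `compress u v s'` is also present, or an old
set fixed by the compression. -/
lemma rel_of_mem_compression {R : Finset α → Finset α → Prop} (hR : ∀ s s', R s s' → R s' s)
    (hmoved : ∀ s s', UV.compress u v s ≠ s → UV.compress u v s' ≠ s' → R s s' →
      R (UV.compress u v s) (UV.compress u v s'))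
    (hcross : ∀ s s', UV.compress u v s ≠ s → UV.compress u v s' ≠ s' →
      R s (UV.compress u v s') → R (UV.compress u v s) s')
    (hfixed : ∀ s s', UV.compress u v s ≠ s → UV.compress u v s' = s' → R s s' →
      R (UV.compress u v s) s')
    (h𝒜 : ∀ s ∈ 𝒜, ∀ s' ∈ 𝒜, R s s') : ∀ s ∈ 𝓒 u v 𝒜, ∀ s' ∈ 𝓒 u v 𝒜, R s s' := by
  have hmixed : ∀ s ∈ 𝒜, UV.compress u v s ∉ 𝒜 → ∀ s' ∈ 𝒜, UV.compress u v s' ∈ 𝒜 →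
      R (UV.compress u v s) s' := by
    intro s hs hCs s' hs' hCs'
    have hsmoved : UV.compress u v s ≠ s := fun h => hCs (by rwa [h])
    by_cases hs'moved : UV.compress u v s' = s'
    · exact hfixed s s' hsmoved hs'moved (h𝒜 s hs s' hs')
    · exact hcross s s' hsmoved hs'moved (h𝒜 s hs _ hCs')
  intro s hs s' hs'
  rcases UV.mem_compression.1 hs with ⟨hs, hCs⟩ | ⟨hs, t, ht, rfl⟩ <;>
    rcases UV.mem_compression.1 hs' with ⟨hs', hCs'⟩ | ⟨hs', t', ht', rfl⟩
  · exact h𝒜 s hs s' hs'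
  · exact hR _ _ (hmixed t' ht' hs' s hs hCs)
  · exact hmixed t ht hs s' hs' hCs'
  · exact hmoved t t' (fun h => hs (by rwa [h])) (fun h => hs' (by rwa [h])) (h𝒜 t ht t' ht')

lemma sum_compression_lt (w : Finset α → ℕ)
    (hw : ∀ s, UV.compress u v s ≠ s → w (UV.compress u v s) < w s) (h : 𝓒 u v 𝒜 ≠ 𝒜) :
    ∑ s ∈ 𝓒 u v 𝒜, w s < ∑ s ∈ 𝒜, w s := by
  set 𝒦 := {s ∈ 𝒜 | UV.compress u v s ∈ 𝒜}
  set ℳ := {s ∈ 𝒜 | UV.compress u v s ∉ 𝒜}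
  have hℳ : ℳ.Nonempty := by
    refine nonempty_iff_ne_empty.2 fun hℳ => h ?_
    have hC : ∀ s ∈ 𝒜, UV.compress u v s ∈ 𝒜 := fun s hs =>
      by_contra fun hCs => (eq_empty_iff_forall_notMem.1 hℳ) s (mem_filter.2 ⟨hs, hCs⟩)
    ext s
    rw [UV.mem_compression]
    refine ⟨?_, fun hs => Or.inl ⟨hs, hC s hs⟩⟩
    rintro (⟨hs, -⟩ | ⟨-, t, ht, rfl⟩)
    exacts [hs, hC t ht]
  calc ∑ s ∈ 𝓒 u v 𝒜, w s = ∑ s ∈ 𝒦, w s + ∑ s ∈ ℳ, w (UV.compress u v s) := by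
        rw [UV.compression, sum_union UV.compress_disjoint, filter_image,
          sum_image UV.compress_injOn]
    _ < ∑ s ∈ 𝒦, w s + ∑ s ∈ ℳ, w s := by
        refine Nat.add_lt_add_left (sum_lt_sum_of_nonempty hℳ fun s hs => hw s ?_) _
        exact fun hCs => (mem_filter.1 hs).2 (by rw [hCs]; exact (mem_filter.1 hs).1)
    _ = ∑ s ∈ 𝒜, w s := sum_filter_add_sum_filter_not _ _ _

lemma exists_isCompressed {Q : Finset α → Finset α → Prop} {P : Finset (Finset α) → Prop}
    (w : Finset α → ℕ)
    (hw : ∀ u v, Q u v → ∀ s, UV.compress u v s ≠ s → w (UV.compress u v s) < w s)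
    (hP : ∀ u v, Q u v → ∀ 𝒜, P 𝒜 → P (𝓒 u v 𝒜)) (h𝒜 : P 𝒜) :
    ∃ ℬ, P ℬ ∧ #ℬ = #𝒜 ∧ ∀ u v, Q u v → UV.IsCompressed u v ℬ := by
  induction hm : ∑ s ∈ 𝒜, w s using Nat.strong_induction_on generalizing 𝒜 with
  | _ m ih =>
    by_cases hc : ∀ u v, Q u v → UV.IsCompressed u v 𝒜
    · exact ⟨𝒜, h𝒜, rfl, hc⟩
    push Not at hc
    obtain ⟨u, v, huv, hne⟩ := hc
    obtain ⟨ℬ, hℬ, hcard, hcomp⟩ :=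
      ih _ (hm ▸ sum_compression_lt w (hw u v huv) hne) (hP u v huv _ h𝒜) rfl
    exact ⟨ℬ, hℬ, hcard.trans (UV.card_compression _ _ _), hcomp⟩

end Compression

section DownCompression

variable {𝒜 𝒢 : Finset (Finset α)} {d : ℕ}

def DiamLE (d : ℕ) (𝒜 : Finset (Finset α)) : Prop := ∀ s ∈ 𝒜, ∀ s' ∈ 𝒜, #(s ∆ s') ≤ d

lemma compress_empty_singleton (a : α) (s : Finset α) : UV.compress ∅ {a} s = s.erase a := by
  by_cases ha : a ∈ s
  · rw [UV.compress_of_disjoint_of_le (disjoint_empty_left _) (singleton_subset_iff.2 ha),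
      sup_eq_union, union_empty, sdiff_singleton_eq_erase]
  · rw [erase_eq_of_notMem ha, UV.compress, if_neg (by simpa using ha)]

lemma diamLE_compression (a : α) (h𝒜 : DiamLE d 𝒜) : DiamLE d (𝓒 ∅ {a} 𝒜) := by
  refine rel_of_mem_compression (fun s s' h => symmDiff_comm s s' ▸ h) ?_ ?_ ?_ h𝒜
  all_goals simp only [compress_empty_singleton, Ne, erase_eq_self, not_not]
  · intro s s' hs hs' h
    convert h using 2
    ext x; simp only [mem_symmDiff, mem_erase]; grind
  · intro s s' hs hs' h
    convert h using 2
    ext x; simp only [mem_symmDiff, mem_erase]; grind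
  · intro s s' hs hs' h
    refine le_trans (card_le_card fun x => ?_) h
    simp only [mem_symmDiff, mem_erase]; grind

lemma isLowerSet_of_forall_erase_mem (h𝒢 : ∀ s ∈ 𝒢, ∀ a, s.erase a ∈ 𝒢) :
    IsLowerSet (𝒢 : Set (Finset α)) := by
  have hsdiff : ∀ t : Finset α, ∀ s ∈ 𝒢, s \ t ∈ 𝒢 := by
    intro t
    induction t using Finset.induction_on with
    | empty => simpa only [sdiff_empty] using fun s hs => hs
    | insert a t _ ih => exact fun s hs => sdiff_insert s t a ▸ h𝒢 _ (ih s hs) a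
  intro s t hts hs
  simpa only [Finset.sdiff_sdiff_eq_self hts, mem_coe] using hsdiff (s \ t) s hs

lemma exists_isLowerSet {u : Finset α} (h𝒜u : 𝒜 ⊆ u.powerset) (h𝒜 : DiamLE d 𝒜) :
    ∃ 𝒢 ⊆ u.powerset, IsLowerSet (𝒢 : Set (Finset α)) ∧ DiamLE d 𝒢 ∧ #𝒢 = #𝒜 := by
  obtain ⟨𝒢, ⟨h𝒢u, h𝒢⟩, hcard, hcomp⟩ :=
    exists_isCompressed (Q := fun u v => u = ∅ ∧ ∃ a, v = {a})
      (P := fun 𝒢 => 𝒢 ⊆ u.powerset ∧ DiamLE d 𝒢) card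
      (by
        rintro _ _ ⟨rfl, a, rfl⟩ s hs
        rw [compress_empty_singleton] at hs ⊢
        exact card_erase_lt_of_mem (by simpa using hs))
      (by
        rintro _ _ ⟨rfl, a, rfl⟩ 𝒢 ⟨h𝒢u, h𝒢⟩
        refine ⟨compression_subset h𝒢u fun s hs => ?_, diamLE_compression a h𝒢⟩
        rw [compress_empty_singleton, mem_powerset] at *
        exact (erase_subset a s).trans hs)
      ⟨h𝒜u, h𝒜⟩
  refine ⟨𝒢, h𝒢u, isLowerSet_of_forall_erase_mem fun s hs a => ?_, h𝒢, hcard⟩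
  have := UV.compress_mem_compression (u := ∅) (v := {a}) hs
  rwa [(hcomp ∅ {a} ⟨rfl, a, rfl⟩).eq, compress_empty_singleton] at this

lemma card_union_le_of_isLowerSet (h𝒢 : IsLowerSet (𝒢 : Set (Finset α))) (hd : DiamLE d 𝒢)
    {s s' : Finset α} (hs : s ∈ 𝒢) (hs' : s' ∈ 𝒢) : #(s ∪ s') ≤ d := by
  have := hd s hs (s' \ s) (h𝒢 (sdiff_subset : s' \ s ⊆ s') hs')
  rwa [symmDiff_sdiff_eq_sup] at this

end DownCompression

section Shifting

variable {𝒜 : Finset (Finset α)} {s : Finset α} {i j : α} {t : ℕ}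

def TIntersecting (t : ℕ) (𝒜 : Finset (Finset α)) : Prop := ∀ s ∈ 𝒜, ∀ s' ∈ 𝒜, t ≤ #(s ∩ s')

lemma TIntersecting.of_le {t' : ℕ} (h : TIntersecting t 𝒜) (ht : t' ≤ t) :
    TIntersecting t' 𝒜 :=
  fun s hs s' hs' => ht.trans (h s hs s' hs')

lemma TIntersecting.subset {ℬ : Finset (Finset α)} (h : TIntersecting t ℬ) (h𝒜 : 𝒜 ⊆ ℬ) :
    TIntersecting t 𝒜 :=
  fun s hs s' hs' => h s (h𝒜 hs) s' (h𝒜 hs')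

lemma compress_singleton_of_notMem_of_mem (hi : i ∉ s) (hj : j ∈ s) :
    UV.compress {i} {j} s = insert i (s.erase j) := by
  rw [UV.compress_of_disjoint_of_le (disjoint_singleton_left.2 hi) (singleton_subset_iff.2 hj)]
  ext x
  simp only [mem_sdiff, sup_eq_union, mem_union, mem_singleton, mem_insert, mem_erase]
  grind

lemma compress_singleton_ne_iff : UV.compress {i} {j} s ≠ s ↔ i ∉ s ∧ j ∈ s := by
  refine ⟨fun h => ?_, fun ⟨hi, hj⟩ h => ?_⟩
  · by_contra hc
    rw [UV.compress, if_neg (by simpa [not_and_or] using hc)] at h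
    exact h rfl
  · rw [compress_singleton_of_notMem_of_mem hi hj] at h
    exact hi (h ▸ mem_insert_self i _)

lemma tIntersecting_compression (h𝒜 : TIntersecting t 𝒜) :
    TIntersecting t (𝓒 {i} {j} 𝒜) := by
  have swap_le {X Y : Finset α} (h : ∀ x ∈ X, Equiv.swap i j x ∈ Y) : #X ≤ #Y :=
    card_le_card_of_injOn _ h (Equiv.swap i j).injective.injOn
  refine rel_of_mem_compression (fun s s' h => inter_comm s s' ▸ h) ?_ ?_ ?_ h𝒜
  all_goals simp only [compress_singleton_ne_iff]
  · rintro s s' ⟨hi, hj⟩ ⟨hi', hj'⟩ h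
    rw [compress_singleton_of_notMem_of_mem hi hj, compress_singleton_of_notMem_of_mem hi' hj']
    refine h.trans (swap_le fun x hx => ?_)
    simp only [mem_inter, mem_insert, mem_erase, Equiv.swap_apply_def] at hx ⊢
    grind
  · rintro s s' ⟨hi, hj⟩ ⟨hi', hj'⟩ h
    rw [compress_singleton_of_notMem_of_mem hi hj]
    rw [compress_singleton_of_notMem_of_mem hi' hj'] at h
    convert h using 2
    ext x; simp only [mem_inter, mem_insert, mem_erase]; grind
  · rintro s s' ⟨hi, hj⟩ hs' h
    have hs' := mt compress_singleton_ne_iff.2 (not_not_intro hs')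
    rw [compress_singleton_of_notMem_of_mem hi hj]
    refine h.trans (swap_le fun x hx => ?_)
    simp only [mem_inter, mem_insert, mem_erase, Equiv.swap_apply_def] at hx ⊢
    grind

lemma shadow_iterate_compression_singleton_subset (i j : α) (t : ℕ) (𝒜 : Finset (Finset α)) :
    ∂^[t] (𝓒 {i} {j} 𝒜) ⊆ 𝓒 {i} {j} (∂^[t] 𝒜) := by
  induction t generalizing 𝒜 with
  | zero => exact Subset.rfl
  | succ t ih =>
    rw [Function.iterate_succ_apply, Function.iterate_succ_apply]
    refine (shadow_monotone.iterate t ?_).trans (ih (∂ 𝒜))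
    refine UV.shadow_compression_subset_compression_shadow _ _ fun x hx =>
      ⟨j, mem_singleton_self j, ?_⟩
    rw [mem_singleton.1 hx, erase_singleton, erase_singleton]
    exact UV.isCompressed_self _ _

lemma card_shadow_iterate_compression_singleton_le (i j : α) (t : ℕ) (𝒜 : Finset (Finset α)) :
    #(∂^[t] (𝓒 {i} {j} 𝒜)) ≤ #(∂^[t] 𝒜) :=
  (card_le_card (shadow_iterate_compression_singleton_subset i j t 𝒜)).trans
    (UV.card_compression _ _ _).le

end Shifting

section Shadow

variable {𝒜 : Finset (Finset α)} {k t : ℕ}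

lemma card_le_one_of_tIntersecting {u : Finset α} (h𝒜 : 𝒜 ⊆ powersetCard t u)
    (ht : TIntersecting t 𝒜) : #𝒜 ≤ 1 := by
  refine card_le_one.2 fun s hs s' hs' => ?_
  have hcard : ∀ {s}, s ∈ 𝒜 → #s = t := fun hs => (mem_powersetCard.1 (h𝒜 hs)).2
  calc s = s ∩ s' := (eq_of_subset_of_card_le inter_subset_left (hcard hs ▸ ht s hs s' hs')).symm
    _ = s' := eq_of_subset_of_card_le inter_subset_right (hcard hs' ▸ ht s hs s' hs')

lemma shadow_iterate_subset_powersetCard {u : Finset α} (h𝒜 : 𝒜 ⊆ powersetCard k u) :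
    ∂^[t] 𝒜 ⊆ powersetCard (k - t) u := by
  intro s hs
  obtain ⟨s', hs', hss', hcard⟩ := mem_shadow_iterate_iff_exists_sdiff.1 hs
  obtain ⟨hs'u, hs'k⟩ := mem_powersetCard.1 (h𝒜 hs')
  rw [card_sdiff_of_subset hss'] at hcard
  have := card_le_card hss'
  exact mem_powersetCard.2 ⟨hss'.trans hs'u, by omega⟩

lemma shadow_iterate_nonMemberSubfamily_subset (a : α) (t : ℕ) (𝒜 : Finset (Finset α)) :
    ∂^[t] (𝒜.nonMemberSubfamily a) ⊆ (∂^[t] 𝒜).nonMemberSubfamily a := by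
  intro s hs
  obtain ⟨s', hs', hss', hcard⟩ := mem_shadow_iterate_iff_exists_sdiff.1 hs
  obtain ⟨hs'𝒜, ha⟩ := mem_nonMemberSubfamily.1 hs'
  exact mem_nonMemberSubfamily.2
    ⟨mem_shadow_iterate_iff_exists_sdiff.2 ⟨s', hs'𝒜, hss', hcard⟩, fun h => ha (hss' h)⟩

lemma shadow_iterate_memberSubfamily_subset (a : α) (t : ℕ) (𝒜 : Finset (Finset α)) :
    ∂^[t] (𝒜.memberSubfamily a) ⊆ (∂^[t] 𝒜).memberSubfamily a := by
  intro s hs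
  obtain ⟨s', hs', hss', hcard⟩ := mem_shadow_iterate_iff_exists_sdiff.1 hs
  obtain ⟨hs'𝒜, ha⟩ := mem_memberSubfamily.1 hs'
  refine mem_memberSubfamily.2
    ⟨mem_shadow_iterate_iff_exists_sdiff.2 ⟨insert a s', hs'𝒜, insert_subset_insert a hss', ?_⟩,
      fun h => ha (hss' h)⟩
  rwa [insert_sdiff_insert, sdiff_insert_of_notMem ha]

lemma card_shadow_iterate_memberSubfamily_add_le (a : α) (t : ℕ) (𝒜 : Finset (Finset α)) :
    #(∂^[t] (𝒜.memberSubfamily a)) + #(∂^[t] (𝒜.nonMemberSubfamily a)) ≤ #(∂^[t] 𝒜) :=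
  card_memberSubfamily_add_card_nonMemberSubfamily a (∂^[t] 𝒜) ▸
    add_le_add (card_le_card (shadow_iterate_memberSubfamily_subset a t 𝒜))
      (card_le_card (shadow_iterate_nonMemberSubfamily_subset a t 𝒜))

lemma memberSubfamily_subset_powersetCard {a : α} {u : Finset α}
    (h𝒜 : 𝒜 ⊆ powersetCard k (insert a u)) : 𝒜.memberSubfamily a ⊆ powersetCard (k - 1) u := by
  intro s hs
  obtain ⟨hs𝒜, ha⟩ := mem_memberSubfamily.1 hs
  obtain ⟨hsu, hcard⟩ := mem_powersetCard.1 (h𝒜 hs𝒜)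
  rw [card_insert_of_notMem ha] at hcard
  exact mem_powersetCard.2
    ⟨(subset_insert_iff_of_notMem ha).1 ((subset_insert a s).trans hsu), by omega⟩

lemma nonMemberSubfamily_subset_powersetCard {a : α} {u : Finset α}
    (h𝒜 : 𝒜 ⊆ powersetCard k (insert a u)) : 𝒜.nonMemberSubfamily a ⊆ powersetCard k u := by
  intro s hs
  obtain ⟨hs𝒜, ha⟩ := mem_nonMemberSubfamily.1 hs
  obtain ⟨hsu, hcard⟩ := mem_powersetCard.1 (h𝒜 hs𝒜)
  exact mem_powersetCard.2 ⟨(subset_insert_iff_of_notMem ha).1 hsu, hcard⟩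

/-- Double counting the pairs `W ⊆ s` with `s ∈ 𝒜` and `W ∈ ∂^[t] 𝒜`: each `s` lies above
`C(k, t)` of them, each `W` below at most `C(#u - k + t, t) ≤ C(k, t)`. -/
lemma card_le_card_shadow_iterate_of_le {u : Finset α} (h𝒜 : 𝒜 ⊆ powersetCard k u)
    (htk : t ≤ k) (hu : #u + t ≤ 2 * k) : #𝒜 ≤ #(∂^[t] 𝒜) := by
  have hsized : ∀ {s}, s ∈ 𝒜 → s ⊆ u ∧ #s = k := fun hs => mem_powersetCard.1 (h𝒜 hs)
  have habove : ∀ s ∈ 𝒜, k.choose t ≤ #((∂^[t] 𝒜).bipartiteAbove (fun s W => W ⊆ s) s) := by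
    intro s hs
    calc k.choose t = #(powersetCard (k - t) s) := by
          rw [card_powersetCard, (hsized hs).2, Nat.choose_symm htk]
      _ ≤ _ := card_le_card fun W hW => by
          obtain ⟨hWs, hWcard⟩ := mem_powersetCard.1 hW
          refine (mem_bipartiteAbove _).2
            ⟨mem_shadow_iterate_iff_exists_sdiff.2 ⟨s, hs, hWs, ?_⟩, hWs⟩
          rw [card_sdiff_of_subset hWs, (hsized hs).2, hWcard]
          omega
  have hbelow : ∀ W ∈ ∂^[t] 𝒜, #(𝒜.bipartiteBelow (fun s W => W ⊆ s) W) ≤ k.choose t := by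
    intro W hW
    obtain ⟨hWu, hWcard⟩ := mem_powersetCard.1 (shadow_iterate_subset_powersetCard h𝒜 hW)
    calc #(𝒜.bipartiteBelow (fun s W => W ⊆ s) W) ≤ #(powersetCard t (u \ W)) := by
          refine card_le_card_of_injOn (· \ W) (fun s hs => ?_) fun s hs s' hs' h => ?_
          · obtain ⟨hs, hWs⟩ := (mem_bipartiteBelow _).1 hs
            refine mem_powersetCard.2 ⟨sdiff_subset_sdiff (hsized hs).1 Subset.rfl, ?_⟩
            rw [card_sdiff_of_subset hWs, (hsized hs).2, hWcard]
            omega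
          · rw [← union_sdiff_of_subset ((mem_bipartiteBelow _).1 hs).2,
              ← union_sdiff_of_subset ((mem_bipartiteBelow _).1 hs').2]
            exact congrArg (W ∪ ·) h
      _ ≤ k.choose t := by
          rw [card_powersetCard, card_sdiff_of_subset hWu, hWcard]
          exact Nat.choose_le_choose t (by omega)
  exact Nat.le_of_mul_le_mul_right (card_mul_le_card_mul _ habove hbelow) (Nat.choose_pos htk)

end Shadow

section Katona

variable {𝒜 𝒢 : Finset (Finset ℕ)} {n k t : ℕ}

lemma compression_subset_powersetCard {i j : ℕ} (hij : i < j)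
    (h𝒜 : 𝒜 ⊆ powersetCard k (range n)) : 𝓒 {i} {j} 𝒜 ⊆ powersetCard k (range n) := by
  refine compression_subset h𝒜 fun s hs => ?_
  rw [mem_powersetCard] at hs ⊢
  refine ⟨fun x hx => ?_, by rw [UV.card_compress (by simp), hs.2]⟩
  by_cases hmoved : UV.compress {i} {j} s = s
  · exact hs.1 (hmoved ▸ hx)
  obtain ⟨hi, hj⟩ := compress_singleton_ne_iff.1 hmoved
  rw [compress_singleton_of_notMem_of_mem hi hj, mem_insert] at hx
  rcases hx with rfl | hx
  · exact mem_range.2 (hij.trans (mem_range.1 (hs.1 hj)))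
  · exact hs.1 (mem_of_mem_erase hx)

lemma exists_shifted (h𝒜 : 𝒜 ⊆ powersetCard k (range n)) (ht : TIntersecting t 𝒜) :
    ∃ 𝒢 ⊆ powersetCard k (range n), TIntersecting t 𝒢 ∧ #(∂^[t] 𝒢) ≤ #(∂^[t] 𝒜) ∧
      #𝒢 = #𝒜 ∧ ∀ i j, i < j → UV.IsCompressed {i} {j} 𝒢 := by
  obtain ⟨𝒢, ⟨h𝒢, h𝒢t, h𝒢sh⟩, hcard, hcomp⟩ :=
    exists_isCompressed (Q := fun u v => ∃ i j, i < j ∧ u = {i} ∧ v = {j})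
      (P := fun 𝒢 => 𝒢 ⊆ powersetCard k (range n) ∧ TIntersecting t 𝒢 ∧
        #(∂^[t] 𝒢) ≤ #(∂^[t] 𝒜)) (fun s => ∑ x ∈ s, x)
      (by
        rintro _ _ ⟨i, j, hij, rfl, rfl⟩ s hs
        obtain ⟨hi, hj⟩ := compress_singleton_ne_iff.1 hs
        rw [compress_singleton_of_notMem_of_mem hi hj,
          sum_insert fun h => hi (mem_of_mem_erase h), ← add_sum_erase s _ hj]
        omega)
      (by
        rintro _ _ ⟨i, j, hij, rfl, rfl⟩ 𝒢 ⟨h𝒢, h𝒢t, h𝒢sh⟩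
        exact ⟨compression_subset_powersetCard hij h𝒢, tIntersecting_compression h𝒢t,
          (card_shadow_iterate_compression_singleton_le i j t 𝒢).trans h𝒢sh⟩)
      ⟨h𝒜, ht, le_rfl⟩
  exact ⟨𝒢, h𝒢, h𝒢t, h𝒢sh, hcard, fun i j hij => hcomp _ _ ⟨i, j, hij, rfl, rfl⟩⟩

/-- As `#(insert n s ∪ insert n s') ≤ 2k - t < n + 1`, some `i < n` lies in neither set, and
shifting `n` to `i` in `insert n s` leaves exactly `s ∩ s'` as the intersection with `insert n s'`.
-/
lemma tIntersecting_memberSubfamily_of_shifted (h𝒢 : 𝒢 ⊆ powersetCard k (range (n + 1)))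
    (ht : TIntersecting t 𝒢) (hshift : ∀ i < n, UV.IsCompressed {i} {n} 𝒢)
    (hn : 2 * k < n + 1 + t) : TIntersecting t (𝒢.memberSubfamily n) := by
  intro s hs s' hs'
  obtain ⟨hs𝒢, hns⟩ := mem_memberSubfamily.1 hs
  obtain ⟨hs'𝒢, hns'⟩ := mem_memberSubfamily.1 hs'
  have hunion : #(insert n s ∪ insert n s') < #(range (n + 1)) := by
    have := card_union_add_card_inter (insert n s) (insert n s')
    have := ht _ hs𝒢 _ hs'𝒢
    rw [(mem_powersetCard.1 (h𝒢 hs𝒢)).2, (mem_powersetCard.1 (h𝒢 hs'𝒢)).2] at *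
    rw [card_range]
    omega
  obtain ⟨i, hi, hiunion⟩ := exists_mem_notMem_of_card_lt_card hunion
  simp only [mem_union, mem_insert, not_or] at hiunion
  obtain ⟨⟨hin, his⟩, -, his'⟩ := hiunion
  have hmem : insert i s ∈ 𝒢 := by
    have := UV.compress_mem_compression (u := {i}) (v := {n}) hs𝒢
    rwa [(hshift i (by have := mem_range.1 hi; omega)).eq,
      compress_singleton_of_notMem_of_mem (by simp [hin, his]) (mem_insert_self n s),
      erase_insert hns] at this
  calc t ≤ #(insert i s ∩ insert n s') := ht _ hmem _ hs'𝒢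
    _ = #(s ∩ s') := by
      congr 1
      ext x
      simp only [mem_inter, mem_insert]
      grind

/-- Katona's intersecting shadow theorem. -/
theorem card_le_card_shadow_iterate (h𝒜 : 𝒜 ⊆ powersetCard k (range n))
    (ht : TIntersecting t 𝒜) (htk : t ≤ k) : #𝒜 ≤ #(∂^[t] 𝒜) := by
  induction n generalizing k 𝒜 with
  | zero => exact card_le_card_shadow_iterate_of_le h𝒜 htk (by rw [card_range]; omega)
  | succ n ih =>
    obtain htk | rfl := htk.lt_or_eq
    swap
    · obtain h𝒜 | ⟨s, hs⟩ := 𝒜.eq_empty_or_nonempty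
      · simp [h𝒜]
      refine (card_le_one_of_tIntersecting h𝒜 ht).trans (one_le_card.2 ⟨∅, ?_⟩)
      exact mem_shadow_iterate_iff_exists_sdiff.2
        ⟨s, hs, empty_subset s, by rw [sdiff_empty, (mem_powersetCard.1 (h𝒜 hs)).2]⟩
    by_cases hn : n + 1 + t ≤ 2 * k
    · exact card_le_card_shadow_iterate_of_le h𝒜 htk.le (by rwa [card_range])
    obtain ⟨𝒢, h𝒢, h𝒢t, h𝒢sh, hcard, hshift⟩ := exists_shifted h𝒜 ht
    have h𝒢' : 𝒢 ⊆ powersetCard k (insert n (range n)) := range_add_one ▸ h𝒢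
    calc #𝒜 = #(𝒢.memberSubfamily n) + #(𝒢.nonMemberSubfamily n) := by
          rw [card_memberSubfamily_add_card_nonMemberSubfamily, hcard]
      _ ≤ #(∂^[t] (𝒢.memberSubfamily n)) + #(∂^[t] (𝒢.nonMemberSubfamily n)) := by
          refine add_le_add (ih (memberSubfamily_subset_powersetCard h𝒢') ?_ (by omega))
            (ih (nonMemberSubfamily_subset_powersetCard h𝒢') ?_ htk.le)
          · exact tIntersecting_memberSubfamily_of_shifted h𝒢 h𝒢t
              (fun i hi => hshift i n hi) (by omega)
          · exact h𝒢t.subset (filter_subset _ _)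
      _ ≤ #(∂^[t] 𝒢) := card_shadow_iterate_memberSubfamily_add_le n t 𝒢
      _ ≤ #(∂^[t] 𝒜) := h𝒢sh

end Katona

section Diameter

lemma tIntersecting_image_sdiff {u : Finset α} {𝒜 : Finset (Finset α)} {d : ℕ}
    (h𝒜 : 𝒜 ⊆ u.powerset) (hd : ∀ s ∈ 𝒜, ∀ s' ∈ 𝒜, #(s ∪ s') ≤ d) :
    TIntersecting (#u - d) (𝒜.image (u \ ·)) := by
  simp only [TIntersecting, forall_mem_image]
  intro s hs s' hs'
  rw [← sdiff_union_distrib, card_sdiff_of_subset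
    (union_subset (mem_powerset.1 (h𝒜 hs)) (mem_powerset.1 (h𝒜 hs')))]
  have := hd s hs s' hs'
  omega

variable {𝒢 : Finset (Finset ℕ)} {n d : ℕ}

lemma card_slice_add_card_slice_le (h𝒢 : 𝒢 ⊆ (range n).powerset)
    (hd : ∀ s ∈ 𝒢, ∀ s' ∈ 𝒢, #(s ∪ s') ≤ d) (hdn : d < n) {i k : ℕ} (hik : i + k = d + 1) :
    #(𝒢 # k) + #(𝒢 # i) ≤ n.choose i := by
  have hslice : ∀ r, 𝒢 # r ⊆ powersetCard r (range n) := fun r s hs =>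
    mem_powersetCard.2 ⟨mem_powerset.1 (h𝒢 (slice_subset hs)), (mem_slice.1 hs).2⟩
  set ℋ := (𝒢 # k).image (range n \ ·)
  have hℋ : ℋ ⊆ powersetCard (n - k) (range n) := by
    refine image_subset_iff.2 fun s hs => mem_powersetCard.2 ⟨sdiff_subset, ?_⟩
    obtain ⟨hsn, hsk⟩ := mem_powersetCard.1 (hslice k hs)
    rw [card_sdiff_of_subset hsn, card_range, hsk]
  have hℋcard : #ℋ = #(𝒢 # k) := card_image_of_injOn fun s hs s' hs' h =>
    (Finset.sdiff_sdiff_eq_self (mem_powersetCard.1 (hslice k hs)).1).symm.trans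
      ((congrArg (range n \ ·) h).trans
        (Finset.sdiff_sdiff_eq_self (mem_powersetCard.1 (hslice k hs')).1))
  have hℋt : TIntersecting (n - d - 1) ℋ := by
    refine (tIntersecting_image_sdiff (slice_subset.trans h𝒢) fun s hs s' hs' =>
      hd s (slice_subset hs) s' (slice_subset hs')).of_le ?_
    rw [card_range]
    omega
  have hshadow : ∂^[n - d - 1] ℋ ⊆ powersetCard i (range n) := by
    convert shadow_iterate_subset_powersetCard hℋ using 2
    omega
  have hdisj : Disjoint (∂^[n - d - 1] ℋ) (𝒢 # i) := by
    refine disjoint_left.2 fun W hW hW𝒢 => ?_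
    obtain ⟨U, hU, hWU, -⟩ := mem_shadow_iterate_iff_exists_sdiff.1 hW
    obtain ⟨s, hs, rfl⟩ := mem_image.1 hU
    have hsW : Disjoint s W := disjoint_of_subset_right hWU disjoint_sdiff
    have := hd s (slice_subset hs) W (slice_subset hW𝒢)
    rw [card_union_of_disjoint hsW, (mem_slice.1 hs).2, (mem_slice.1 hW𝒢).2] at this
    omega
  calc #(𝒢 # k) + #(𝒢 # i) ≤ #(∂^[n - d - 1] ℋ) + #(𝒢 # i) := by
        rw [← hℋcard]
        exact Nat.add_le_add_right (card_le_card_shadow_iterate hℋ hℋt (by omega)) _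
    _ = #(∂^[n - d - 1] ℋ ∪ 𝒢 # i) := (card_union_of_disjoint hdisj).symm
    _ ≤ #(powersetCard i (range n)) := card_le_card (union_subset hshadow (hslice i))
    _ = n.choose i := by rw [card_powersetCard, card_range]

lemma card_le_sum_choose {m : ℕ} (h𝒢 : 𝒢 ⊆ (range n).powerset)
    (hd : ∀ s ∈ 𝒢, ∀ s' ∈ 𝒢, #(s ∪ s') ≤ 2 * m) (hn : 2 * m < n) :
    #𝒢 ≤ ∑ i ∈ range (m + 1), n.choose i := by
  calc #𝒢 = ∑ k ∈ range ((m + 1) + (m + 1)), #(𝒢 # k) := by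
        refine card_eq_sum_card_fiberwise fun s hs => mem_range.2 ?_
        have := hd s hs s hs
        rw [union_self] at this
        omega
    _ = ∑ i ∈ range (m + 1), (#(𝒢 # (2 * m + 1 - i)) + #(𝒢 # i)) := by
        rw [sum_range_add, sum_add_distrib, add_comm, ← sum_range_reflect]
        congr 1
        refine sum_congr rfl fun i hi => ?_
        have := mem_range.1 hi
        congr 2
        omega
    _ ≤ ∑ i ∈ range (m + 1), n.choose i :=
        sum_le_sum fun i hi =>
          card_slice_add_card_slice_le h𝒢 hd hn (by have := mem_range.1 hi; omega)

end Diameter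

def onesFinset {n : ℕ} (x : Fin n → ZMod 2) : Finset ℕ :=
  ({i | x i ≠ 0} : Finset (Fin n)).image Fin.val

lemma hammingDist_eq_card_symmDiff {n : ℕ} (x y : Fin n → ZMod 2) :
    hammingDist x y = #(onesFinset x ∆ onesFinset y) := by
  rw [onesFinset, onesFinset, ← image_symmDiff _ _ Fin.val_injective,
    card_image_of_injective _ Fin.val_injective, hammingDist]
  congr 1
  ext i
  simp only [mem_filter, mem_univ, true_and, mem_symmDiff]
  generalize x i = a, y i = b
  revert a b
  decide

lemma onesFinset_injective {n : ℕ} : Function.Injective (onesFinset (n := n)) := fun x y h =>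
  hammingDist_eq_zero.1 <| by
    rw [hammingDist_eq_card_symmDiff, h, symmDiff_self, bot_eq_empty, card_empty]

lemma onesFinset_mem_powerset {n : ℕ} (x : Fin n → ZMod 2) : onesFinset x ∈ (range n).powerset :=
  mem_powerset.2 fun m hm => by
    obtain ⟨i, -, rfl⟩ := mem_image.1 hm
    exact mem_range.2 i.isLt

end Kleitman

open Kleitman

theorem stmt_15 (n s : ℕ) (hn : 2 * s < n - 1)
    (A : Finset (Fin n → ZMod 2))
    (hdiam : ∀ x ∈ A, ∀ y ∈ A, hammingDist x y ≤ 2 * s) :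
    A.card ≤ ∑ i ∈ Finset.range (s + 1), n.choose i := by
  have h𝒜 : A.image onesFinset ⊆ (range n).powerset :=
    image_subset_iff.2 fun x _ => onesFinset_mem_powerset x
  have hd : DiamLE (2 * s) (A.image onesFinset) := by
    simpa only [DiamLE, forall_mem_image, ← hammingDist_eq_card_symmDiff] using hdiam
  obtain ⟨𝒢, h𝒢, hlower, hd𝒢, hcard⟩ := exists_isLowerSet h𝒜 hd
  calc #A = #𝒢 := by rw [hcard, card_image_of_injective _ onesFinset_injective]
    _ ≤ _ := card_le_sum_choose h𝒢
      (fun _ h _ h' => card_union_le_of_isLowerSet hlower hd𝒢 h h') (by omega)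
end
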